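/- Order saturation of the conditional estimator: if P is shift-invariant on E^{k+1} and is n-th order Markov for some n ≤ k, meaning P(γ^{(m+1)}|γ^{(1:m)}) = P(γ^{(m+1)}|γ^{(m-n+1:m)}) for all m ≥ n, then the k-th order conditional estimator ∑_γ P(γ)·log(P(γ^{(k+1)}|γ^{(1:k)})/P(γ^{(1)}|γ^{(k+1:2)})) equals the n-th order conditional estimator computed from the (n+1)-marginal of P. -/

import Mathlib

open Finset

variable {E : Type*}

/-- Marginal of a distribution `P` on sequences of length `k+1` over the window
of `m` consecutive coordinates starting at position `j` (indices taken mod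
`k+1`; for `j + m ≤ k+1` this is the ordinary window marginal). -/
def window [Fintype E] [DecidableEq E] (k : ℕ) (P : (Fin (k + 1) → E) → ℝ)
    (j m : ℕ) : (Fin m → E) → ℝ :=
  fun δ => ∑ γ : Fin (k + 1) → E,
    if (∀ i : Fin m, γ ⟨(j + (i : ℕ)) % (k + 1), Nat.mod_lt _ (Nat.succ_pos k)⟩ = δ i)
      then P γ else 0

/-- Reversal of a finite sequence. -/
def seqRev (m : ℕ) (δ : Fin m → E) : Fin m → E := fun i => δ i.rev

/-- The first `m` coordinates of a sequence of length `m+1`. -/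
def seqInit (m : ℕ) (δ : Fin (m + 1) → E) : Fin m → E := fun i => δ i.castSucc

/-- The last `n+1` coordinates of a sequence of length `m+1` (for `n ≤ m`). -/
def seqLast (m n : ℕ) (h : n ≤ m) (δ : Fin (m + 1) → E) : Fin (n + 1) → E :=
  fun i => δ ⟨m - n + (i : ℕ), by have := i.isLt; omega⟩

/-! The `k`-th order estimator only sees `γ` through `P(γ^{(k+1)} | γ^{(1:k)})` and the same
quantity for the reversed sequence. By the Markov property the first is the `n`-th order
conditional probability of the last `n+1` letters of `γ`, and the second that of the reversed
first `n+1` letters. Averaging over `P`, these two windows have the laws of the `(n+1)`-marginals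
at positions `k-n` and `0`, which agree by shift invariance. -/

section CyclicWindow

variable {k : ℕ}

def cyclicIndex (k j m : ℕ) (i : Fin m) : Fin (k + 1) :=
  ⟨(j + (i : ℕ)) % (k + 1), Nat.mod_lt _ (Nat.succ_pos k)⟩

lemma cyclicIndex_injective {j m : ℕ} (hm : m ≤ k + 1) :
    Function.Injective (cyclicIndex k j m) := by
  intro a b hab
  have hmod : (a : ℕ) % (k + 1) = (b : ℕ) % (k + 1) :=
    Nat.ModEq.add_left_cancel' j (congrArg Fin.val hab)
  rwa [Nat.mod_eq_of_lt (a.isLt.trans_le hm), Nat.mod_eq_of_lt (b.isLt.trans_le hm),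
    ← Fin.ext_iff] at hmod

def cyclicWindow (k j m : ℕ) (γ : Fin (k + 1) → E) : Fin m → E :=
  γ ∘ cyclicIndex k j m

lemma cyclicWindow_surjective [Nonempty E] {j m : ℕ} (hm : m ≤ k + 1) :
    Function.Surjective (cyclicWindow (E := E) k j m) :=
  (cyclicIndex_injective hm).surjective_comp_right

lemma cyclicWindow_zero_succ (γ : Fin (k + 1) → E) : cyclicWindow k 0 (k + 1) γ = γ := by
  funext i
  simp [cyclicWindow, cyclicIndex, Nat.mod_eq_of_lt i.isLt]

lemma cyclicWindow_sub_eq_seqLast {n : ℕ} (hnk : n ≤ k) (γ : Fin (k + 1) → E) :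
    cyclicWindow k (k - n) (n + 1) γ = seqLast k n hnk γ := by
  funext i
  have := i.isLt
  simp only [cyclicWindow, cyclicIndex, Function.comp_apply, seqLast,
    Nat.mod_eq_of_lt (show k - n + i < k + 1 by omega)]

lemma seqLast_seqRev {n : ℕ} (hnk : n ≤ k) (γ : Fin (k + 1) → E) :
    seqLast k n hnk (seqRev (k + 1) γ) = seqRev (n + 1) (cyclicWindow k 0 (n + 1) γ) := by
  funext i
  have := i.isLt
  simp only [seqLast, seqRev, cyclicWindow, cyclicIndex, Function.comp_apply, Fin.rev, zero_add,
    Nat.mod_eq_of_lt (show n + 1 - (i + 1) < k + 1 by omega)]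
  congr 2
  omega

end CyclicWindow

section Window

variable [Fintype E] [DecidableEq E] {k : ℕ} {P : (Fin (k + 1) → E) → ℝ}

lemma window_eq_sum_ite (j m : ℕ) (δ : Fin m → E) :
    window k P j m δ = ∑ γ, if cyclicWindow k j m γ = δ then P γ else 0 := by
  simp only [window, cyclicWindow, cyclicIndex, funext_iff, Function.comp_apply]

lemma window_zero_succ : window k P 0 (k + 1) = P := by
  funext δ
  simp [window_eq_sum_ite, cyclicWindow_zero_succ]

lemma sum_window_mul (j m : ℕ) (f : (Fin m → E) → ℝ) :
    ∑ δ, window k P j m δ * f δ = ∑ γ, P γ * f (cyclicWindow k j m γ) := by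
  simp only [window_eq_sum_ite, sum_mul, ite_mul, zero_mul]
  rw [sum_comm]
  simp

lemma window_pos [Nonempty E] (hpos : ∀ γ, 0 < P γ) {j m : ℕ} (hm : m ≤ k + 1)
    (δ : Fin m → E) : 0 < window k P j m δ := by
  obtain ⟨γ, rfl⟩ := cyclicWindow_surjective (j := j) hm δ
  rw [window_eq_sum_ite, ← sum_filter]
  exact sum_pos (fun γ' _ => hpos γ') ⟨γ, by simp⟩

/-- `P(δ^{(m+1)} | δ^{(1:m)})`, computed from the marginals of `P` on the first coordinates. -/
noncomputable def condProb (k : ℕ) (P : (Fin (k + 1) → E) → ℝ) (m : ℕ)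
    (δ : Fin (m + 1) → E) : ℝ :=
  window k P 0 (m + 1) δ / window k P 0 m (seqInit m δ)

lemma condProb_pos (hpos : ∀ γ, 0 < P γ) {m : ℕ} (hm : m ≤ k) (δ : Fin (m + 1) → E) :
    0 < condProb k P m δ := by
  have : Nonempty E := ⟨δ 0⟩
  exact div_pos (window_pos hpos (by omega) δ) (window_pos hpos (by omega) _)

end Window

theorem stmt_17_general [Fintype E] [DecidableEq E] (k n : ℕ) (hnk : n ≤ k)
    (P : (Fin (k + 1) → E) → ℝ)
    (hpos : ∀ γ, 0 < P γ)
    (hshift : ∀ j m : ℕ, j + m ≤ k + 1 → window k P j m = window k P 0 m)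
    (hmarkov : ∀ m (hnm : n ≤ m), m ≤ k → ∀ δ : Fin (m + 1) → E,
      window k P 0 (m + 1) δ / window k P 0 m (seqInit m δ) =
        window k P 0 (n + 1) (seqLast m n hnm δ) /
          window k P 0 n (seqInit n (seqLast m n hnm δ))) :
    ∑ γ : Fin (k + 1) → E,
        P γ *
          Real.log
            ((P γ / window k P 0 k (seqInit k γ)) /
              (P (seqRev (k + 1) γ) / window k P 0 k (seqInit k (seqRev (k + 1) γ)))) =
      ∑ δ : Fin (n + 1) → E,
        window k P 0 (n + 1) δ *
          Real.log
            ((window k P 0 (n + 1) δ / window k P 0 n (seqInit n δ)) /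
              (window k P 0 (n + 1) (seqRev (n + 1) δ) /
                window k P 0 n (seqInit n (seqRev (n + 1) δ)))) := by
  have hcond : ∀ γ,
      P γ / window k P 0 k (seqInit k γ) = condProb k P n (seqLast k n hnk γ) := by
    intro γ
    simpa only [window_zero_succ, condProb] using hmarkov k hnk le_rfl γ
  have log_condProb_div : ∀ δ δ' : Fin (n + 1) → E,
      Real.log (condProb k P n δ / condProb k P n δ') =
        Real.log (condProb k P n δ) - Real.log (condProb k P n δ') := fun δ δ' =>
    Real.log_div (condProb_pos hpos hnk δ).ne' (condProb_pos hpos hnk δ').ne'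
  calc _ = ∑ γ, P γ * (Real.log (condProb k P n (cyclicWindow k (k - n) (n + 1) γ))
          - Real.log (condProb k P n (seqRev (n + 1) (cyclicWindow k 0 (n + 1) γ)))) := by
        refine sum_congr rfl fun γ _ => ?_
        rw [hcond, hcond, seqLast_seqRev, cyclicWindow_sub_eq_seqLast, log_condProb_div]
    _ = ∑ δ, window k P (k - n) (n + 1) δ * Real.log (condProb k P n δ)
          - ∑ δ, window k P 0 (n + 1) δ * Real.log (condProb k P n (seqRev (n + 1) δ)) := by
        simp only [mul_sub, sum_sub_distrib, sum_window_mul]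
    _ = _ := by
        rw [hshift (k - n) (n + 1) (by omega), ← sum_sub_distrib]
        refine sum_congr rfl fun δ _ => ?_
        rw [← mul_sub, ← log_condProb_div]
        rfl

/-- Order saturation of the conditional estimator: if the shift-invariant,
fully supported distribution `P` on `E^{k+1}` is n-th order Markov (n ≤ k),
the k-th order conditional estimator equals the n-th order conditional
estimator computed from the (n+1)-marginal of `P`. -/
theorem stmt_17 [Fintype E] [DecidableEq E] (k n : ℕ) (hn : 1 ≤ n) (hnk : n ≤ k)
    (P : (Fin (k + 1) → E) → ℝ)
    (hpos : ∀ γ, 0 < P γ) (hsum : ∑ γ, P γ = 1)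
    (hshift : ∀ j m : ℕ, j + m ≤ k + 1 → window k P j m = window k P 0 m)
    (hmarkov : ∀ m (hnm : n ≤ m), m ≤ k → ∀ δ : Fin (m + 1) → E,
      window k P 0 (m + 1) δ / window k P 0 m (seqInit m δ) =
        window k P 0 (n + 1) (seqLast m n hnm δ) /
          window k P 0 n (seqInit n (seqLast m n hnm δ))) :
    ∑ γ : Fin (k + 1) → E,
        P γ *
          Real.log
            ((P γ / window k P 0 k (seqInit k γ)) /
              (P (seqRev (k + 1) γ) / window k P 0 k (seqInit k (seqRev (k + 1) γ)))) =
      ∑ δ : Fin (n + 1) → E,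
        window k P 0 (n + 1) δ *
          Real.log
            ((window k P 0 (n + 1) δ / window k P 0 n (seqInit n δ)) /
              (window k P 0 (n + 1) (seqRev (n + 1) δ) /
                window k P 0 n (seqInit n (seqRev (n + 1) δ)))) :=
  stmt_17_general k n hnk P hpos hshift hmarkov
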